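/- Deterministic bound used for I₄: with equal sample sizes n_0 = n = m and s ≥ 2, for every 1 ≤ i ≤ s and any real sample means, (X̄_i^{(s)} − μ̂_i^{(s)})² ≤ (X̄_i^{(s)} − X̄_0)² · Π_{1 ≤ j ≤ s, j ≠ i} 𝟙{X̄_j^{(s)} > 2X̄_i^{(s)} − X̄_0}. -/

import Mathlib

open MeasureTheory ProbabilityTheory Filter Finset BoundedContinuousFunction
open scoped NNReal Topology

noncomputable section


/-- The sample mean of the first `n` observations of the sequence `x`. -/
def sampleMean (x : ℕ → ℝ) (n : ℕ) : ℝ := (∑ j ∈ Finset.range n, x j) / n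

/-- Vector of sample means: population `0` has sample size `n0`, every other population
has sample size `nn`.  `X i j` is the `j`-th observation from population `i`. -/
def xbarVec (n0 nn : ℕ) (X : ℕ → ℕ → ℝ) (i : ℕ) : ℝ :=
  sampleMean (X i) (if i = 0 then n0 else nn)

/-- Tree-order restricted MLE of the control mean `μ₀`:
`μ̂₀ = min_{I ⊆ {1,…,s}} (n₀ X̄₀ + Σ_{i∈I} n X̄ᵢ) / (n₀ + n |I|)` (the minimum includes `I = ∅`). -/
def treeMLE0 (n0 nn s : ℕ) (xbar : ℕ → ℝ) : ℝ :=
  ((Finset.Icc 1 s).powerset).inf' (Finset.powerset_nonempty _)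
    fun I => ((n0 : ℝ) * xbar 0 + ∑ i ∈ I, (nn : ℝ) * xbar i)
      / ((n0 : ℝ) + (nn : ℝ) * I.card)

/-- Tree-order restricted MLE of the `i`-th treatment mean (`1 ≤ i ≤ s`):
`μ̂ᵢ = max (μ̂₀, X̄ᵢ)`. -/
def treeMLE (n0 nn s : ℕ) (xbar : ℕ → ℝ) (i : ℕ) : ℝ :=
  max (treeMLE0 n0 nn s xbar) (xbar i)

/-- Tree-order restricted MLE of the common variance `σ²`. -/
def sigmaHat (n0 nn s : ℕ) (X : ℕ → ℕ → ℝ) : ℝ :=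
  (∑ j ∈ Finset.range n0, (X 0 j - treeMLE0 n0 nn s (xbarVec n0 nn X)) ^ 2
    + ∑ i ∈ Finset.Icc 1 s, ∑ j ∈ Finset.range nn,
        (X i j - treeMLE n0 nn s (xbarVec n0 nn X) i) ^ 2)
    / ((n0 + s * nn : ℕ) : ℝ)

/-!
Since `I = ∅` is admissible, `μ̂₀ ≤ X̄₀`; hence `X̄ᵢ ≤ μ̂ᵢ ≤ max X̄₀ X̄ᵢ`, which bounds the residual by
`(X̄ᵢ − X̄₀)²`. Since every `I = {j}` is admissible, `μ̂₀ ≤ (X̄₀ + X̄ⱼ)/2`, so a single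
`j` with `X̄ⱼ ≤ 2X̄ᵢ − X̄₀` forces `μ̂₀ ≤ X̄ᵢ`, i.e. `μ̂ᵢ = X̄ᵢ` and a zero residual.
-/

section TreeOrder

variable {n0 nn s : ℕ} (xbar : ℕ → ℝ)

theorem treeMLE0_le_of_subset {I : Finset ℕ} (hI : I ⊆ Icc 1 s) :
    treeMLE0 n0 nn s xbar ≤ (n0 * xbar 0 + ∑ i ∈ I, nn * xbar i) / (n0 + nn * I.card) :=
  inf'_le _ (mem_powerset.2 hI)

theorem treeMLE0_le_xbar_zero (hn0 : n0 ≠ 0) : treeMLE0 n0 nn s xbar ≤ xbar 0 := by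
  simpa [hn0] using treeMLE0_le_of_subset (n0 := n0) (nn := nn) xbar (empty_subset (Icc 1 s))

theorem treeMLE0_le_of_mem {j : ℕ} (hj : j ∈ Icc 1 s) :
    treeMLE0 n0 nn s xbar ≤ (n0 * xbar 0 + nn * xbar j) / (n0 + nn) := by
  simpa using treeMLE0_le_of_subset (n0 := n0) (nn := nn) xbar (singleton_subset_iff.2 hj)

theorem sq_sub_treeMLE_le (hn0 : n0 ≠ 0) (i : ℕ) :
    (xbar i - treeMLE n0 nn s xbar i) ^ 2 ≤ (xbar i - xbar 0) ^ 2 := by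
  have h0 := treeMLE0_le_xbar_zero (nn := nn) (s := s) xbar hn0
  rcases le_total (treeMLE0 n0 nn s xbar) (xbar i) with hi | hi
  · rw [treeMLE, max_eq_right hi, sub_self, zero_pow two_ne_zero]
    positivity
  · rw [treeMLE, max_eq_left hi]
    nlinarith

theorem treeMLE_eq_self_of_le_two_mul_sub {m i j : ℕ} (hm : m ≠ 0) (hj : j ∈ Icc 1 s)
    (hij : xbar j ≤ 2 * xbar i - xbar 0) : treeMLE m m s xbar i = xbar i := by
  have hm' : (m : ℝ) ≠ 0 := Nat.cast_ne_zero.2 hm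
  refine max_eq_right ?_
  calc treeMLE0 m m s xbar ≤ (m * xbar 0 + m * xbar j) / (m + m) := treeMLE0_le_of_mem xbar hj
    _ = (xbar 0 + xbar j) / 2 := by field_simp; ring
    _ ≤ xbar i := by linarith

end TreeOrder

theorem treatment_residual_sq_bound_general
    (m s : ℕ) (hm : 1 ≤ m) (xbar : ℕ → ℝ) :
    ∀ i ∈ Finset.Icc 1 s,
      (xbar i - treeMLE m m s xbar i) ^ 2 ≤
        (xbar i - xbar 0) ^ 2 *
          ∏ j ∈ (Finset.Icc 1 s).erase i,
            (if 2 * xbar i - xbar 0 < xbar j then (1 : ℝ) else 0) := by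
  intro i _
  by_cases hall : ∀ j ∈ (Icc 1 s).erase i, 2 * xbar i - xbar 0 < xbar j
  · rw [prod_congr rfl fun j hj => if_pos (hall j hj), prod_const_one, mul_one]
    exact sq_sub_treeMLE_le xbar (by omega) i
  · push Not at hall
    obtain ⟨j, hj, hij⟩ := hall
    rw [treeMLE_eq_self_of_le_two_mul_sub xbar (by omega) (mem_of_mem_erase hj) hij, sub_self,
      zero_pow two_ne_zero]
    exact mul_nonneg (sq_nonneg _) (prod_nonneg fun _ _ => by split_ifs <;> norm_num)

/-- Deterministic bound used for `I₄`: with equal sample sizes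
`n₀ = n = m` and `s ≥ 2`, for every `1 ≤ i ≤ s` and arbitrary real sample means,
`(X̄ᵢ − μ̂ᵢ)² ≤ (X̄ᵢ − X̄₀)² ∏_{1 ≤ j ≤ s, j ≠ i} 𝟙{X̄ⱼ > 2X̄ᵢ − X̄₀}`. -/
theorem treatment_residual_sq_bound
    (m s : ℕ) (hm : 1 ≤ m) (hs : 2 ≤ s) (xbar : ℕ → ℝ) :
    ∀ i ∈ Finset.Icc 1 s,
      (xbar i - treeMLE m m s xbar i) ^ 2 ≤
        (xbar i - xbar 0) ^ 2 *
          ∏ j ∈ (Finset.Icc 1 s).erase i,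
            (if 2 * xbar i - xbar 0 < xbar j then (1 : ℝ) else 0) :=
  treatment_residual_sq_bound_general m s hm xbar
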